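/- For every numeric planning problem Π and every complete pattern ≺ (a pattern in which every action of A occurs at least once), the pattern ≺-encoding Π^≺ dominates the standard encoding Π^S: for every bound n ≥ 0, if Π^S_n is satisfiable then Π^≺_n is satisfiable. -/
import Mathlib


open scoped Classical

namespace PatternPlanning

/-! ## Numeric planning problems -/

/-- A linear expression `∑ w, coeff w * w + const` over the numeric variables `VN`. -/
structure LinExpr (VN : Type) where
  coeff : VN → ℚ
  const : ℚ

/-- Value of a linear expression under a numeric valuation. -/
def LinExpr.eval {VN : Type} [Fintype VN] (e : LinExpr VN) (ν : VN → ℚ) : ℚ :=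
  (∑ w, e.coeff w * ν w) + e.const

/-- The comparison operators `≥ , > , =` of numeric conditions `ψ ⊵ 0`. -/
inductive CompOp : Type
  | ge | gt | eq

/-- `op.holds q` means `q ⊵ 0`. -/
def CompOp.holds : CompOp → ℚ → Prop
  | .ge, q => 0 ≤ q
  | .gt, q => 0 < q
  | .eq, q => q = 0

/-- A numeric condition `ψ ⊵ 0`. -/
structure NumCond (VN : Type) where
  expr : LinExpr VN
  op : CompOp

def NumCond.holds {VN : Type} [Fintype VN] (c : NumCond VN) (ν : VN → ℚ) : Prop :=
  c.op.holds (c.expr.eval ν)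

/-- A propositional condition `v = ⊤` or `v = ⊥`. -/
inductive PropCond (VB : Type)
  | isTrue (v : VB)
  | isFalse (v : VB)

def PropCond.holds {VB : Type} : PropCond VB → (VB → Bool) → Prop
  | .isTrue v, β => β v = true
  | .isFalse v, β => β v = false

/-- An action: propositional and numeric preconditions, Boolean effects `v := ⊤/⊥`
and numeric effects `w := ψ` (each variable assigned at most once, enforced by
the functional representation of the effects). -/
structure Act (VB VN : Type) where
  preB : List (PropCond VB)
  preN : List (NumCond VN)
  effB : VB → Option Bool
  effN : VN → Option (LinExpr VN)

def Act.assignsB {VB VN : Type} (a : Act VB VN) (v : VB) : Prop := a.effB v ≠ none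
def Act.assignsN {VB VN : Type} (a : Act VB VN) (x : VN) : Prop := a.effN x ≠ none

/-- The effect `x := e` is a linear increment `x += ψ` : `e = x + ψ` with `ψ` not
containing any variable assigned by `a`. -/
def Act.isIncr {VB VN : Type} (a : Act VB VN) (x : VN) (e : LinExpr VN) : Prop :=
  e.coeff x = 1 ∧ ∀ y, a.assignsN y → y ≠ x → e.coeff y = 0

/-- The increment part `ψ` of a linear increment `x := x + ψ`. -/
noncomputable def incrPart {VN : Type} (e : LinExpr VN) (x : VN) : LinExpr VN :=
  ⟨Function.update e.coeff x 0, e.const⟩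

/-- The (general) assignment `x := e` is simple: `e` contains no variable assigned by `a`. -/
def Act.isSimpleA {VB VN : Type} (a : Act VB VN) (e : LinExpr VN) : Prop :=
  ∀ y, a.assignsN y → e.coeff y = 0

/-- An action is eligible for rolling. -/
def Act.eligible {VB VN : Type} (a : Act VB VN) : Prop :=
  (∀ v, PropCond.isFalse v ∈ a.preB → a.effB v ≠ some true) ∧
  (∀ v, PropCond.isTrue v ∈ a.preB → a.effB v ≠ some false) ∧
  (∀ x e, a.effN x = some e → a.isIncr x e ∨ a.isSimpleA e) ∧
  (∃ x e, a.effN x = some e ∧ a.isIncr x e)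

/-- A state: values of the Boolean and numeric variables. -/
structure PState (VB VN : Type) where
  boolVal : VB → Bool
  numVal : VN → ℚ

/-- `a` is executable in `s`: all preconditions of `a` hold in `s`. -/
def Act.execIn {VB VN : Type} [Fintype VN] (a : Act VB VN) (s : PState VB VN) : Prop :=
  (∀ c ∈ a.preB, c.holds s.boolVal) ∧ (∀ c ∈ a.preN, c.holds s.numVal)

/-- The result of executing `a` in `s`. -/
def Act.result {VB VN : Type} [Fintype VN] (a : Act VB VN) (s : PState VB VN) : PState VB VN where
  boolVal := fun v => (a.effB v).getD (s.boolVal v)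
  numVal := fun x =>
    match a.effN x with
    | none => s.numVal x
    | some e => e.eval s.numVal

/-- Execution of a sequence of actions: `some` of the last induced state if the
sequence is executable, `none` otherwise. -/
noncomputable def execSeq {VB VN A : Type} [Fintype VN] (acts : A → Act VB VN) :
    List A → PState VB VN → Option (PState VB VN)
  | [], s => some s
  | a :: rest, s =>
      if (acts a).execIn s then execSeq acts rest ((acts a).result s) else none

/-- Goal formulas: propositional combinations of propositional and numeric conditions. -/
inductive Formula (VB VN : Type)
  | prop (c : PropCond VB)
  | num (c : NumCond VN)
  | not (f : Formula VB VN)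
  | and (f g : Formula VB VN)
  | or (f g : Formula VB VN)

def Formula.holds {VB VN : Type} [Fintype VN] :
    Formula VB VN → (VB → Bool) → (VN → ℚ) → Prop
  | .prop c, β, _ => c.holds β
  | .num c, _, ν => c.holds ν
  | .not f, β, ν => ¬ f.holds β ν
  | .and f g, β, ν => f.holds β ν ∧ g.holds β ν
  | .or f g, β, ν => f.holds β ν ∨ g.holds β ν

/-- A numeric planning problem `Π = ⟨V_B, V_N, A, I, G⟩` (the sets of variables and
of actions are the types `VB`, `VN`, `A`). -/
structure Problem (VB VN A : Type) where
  acts : A → Act VB VN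
  init : PState VB VN
  goals : List (Formula VB VN)

def Problem.goalSat {VB VN A : Type} [Fintype VN] (P : Problem VB VN A)
    (β : VB → Bool) (ν : VN → ℚ) : Prop :=
  ∀ f ∈ P.goals, f.holds β ν

/-- `α` is a valid plan for `P`. -/
def Problem.isPlan {VB VN A : Type} [Fintype VN] (P : Problem VB VN A) (α : List A) : Prop :=
  ∃ s, execSeq P.acts α P.init = some s ∧ P.goalSat s.boolVal s.numVal

def Problem.hasPlan {VB VN A : Type} [Fintype VN] (P : Problem VB VN A) : Prop :=
  ∃ α, P.isPlan α

/-! ## ψ[a] : rolled substitution -/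

/-- Value of the variable `x` in `ψ[a]` when the action variable of `a` takes value `k`:
`x + (k-1)·ψ₁` for a linear increment `x += ψ₁`, `ψ₁` for a simple assignment `x := ψ₁`,
`x` otherwise. -/
noncomputable def rolledVarVal {VB VN : Type} [Fintype VN] (a : Act VB VN) (k : ℕ)
    (ν : VN → ℚ) (x : VN) : ℚ :=
  match a.effN x with
  | none => ν x
  | some e =>
      if a.isIncr x e then ν x + ((k : ℚ) - 1) * (incrPart e x).eval ν
      else if a.isSimpleA e then e.eval ν
      else ν x

/-- Value of `ψ[a]` under `ν` when the action variable of `a` takes the value `k`. -/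
noncomputable def rolledEval {VB VN : Type} [Fintype VN] (a : Act VB VN) (k : ℕ)
    (ψ : LinExpr VN) (ν : VN → ℚ) : ℚ :=
  (∑ x, ψ.coeff x * rolledVarVal a k ν x) + ψ.const

/-! ## The rolled-up encoding Π^R and the standard encoding Π^S -/

def occursInPre {VB VN : Type} (a : Act VB VN) (x : VN) : Prop :=
  ∃ c ∈ a.preN, c.expr.coeff x ≠ 0

def occursInEff {VB VN : Type} (a : Act VB VN) (x : VN) : Prop :=
  a.assignsN x ∨ ∃ y e, a.effN y = some e ∧ e.coeff x ≠ 0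

/-- Condition under which `mutex^R(A)` contains `a₁ = 0 ∨ a₂ = 0`. -/
def mutexCond {VB VN : Type} (a₁ a₂ : Act VB VN) : Prop :=
  (∃ v, PropCond.isFalse v ∈ a₁.preB ∧ a₂.effB v = some true) ∨
  (∃ v, PropCond.isTrue v ∈ a₁.preB ∧ a₂.effB v = some false) ∨
  (∃ x, a₁.assignsN x ∧ (occursInEff a₂ x ∨ occursInPre a₂ x))

/-- The symbolic transition relation `T^R(X,A,X')` of the rolled-up encoding, as a
predicate on the values `β,ν` for `X`, `u` for the (ℕ-valued) action variables `A`,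
and `β',ν'` for `X'`. -/
def TR {VB VN A : Type} [Fintype VN] (P : Problem VB VN A)
    (β : VB → Bool) (ν : VN → ℚ) (u : A → ℕ) (β' : VB → Bool) (ν' : VN → ℚ) : Prop :=
  -- pre^R(A)
  (∀ a, 0 < u a →
    (∀ v, PropCond.isFalse v ∈ (P.acts a).preB → β v = false) ∧
    (∀ v, PropCond.isTrue v ∈ (P.acts a).preB → β v = true) ∧
    (∀ c ∈ (P.acts a).preN, c.op.holds (c.expr.eval ν))) ∧
  (∀ a, 1 < u a → ∀ c ∈ (P.acts a).preN,
    c.op.holds (rolledEval (P.acts a) (u a) c.expr ν)) ∧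
  -- eff^R(A)
  (∀ a, 0 < u a →
    (∀ v b, (P.acts a).effB v = some b → β' v = b) ∧
    (∀ x e, (P.acts a).effN x = some e →
      ((P.acts a).isIncr x e → ν' x = ν x + (u a : ℚ) * (incrPart e x).eval ν) ∧
      (¬ (P.acts a).isIncr x e → ν' x = e.eval ν))) ∧
  -- frame^R(V_B ∪ V_N)
  (∀ v, (∀ a, (P.acts a).assignsB v → u a = 0) → β' v = β v) ∧
  (∀ x, (∀ a, (P.acts a).assignsN x → u a = 0) → ν' x = ν x) ∧
  -- mutex^R(A)
  (∀ a₁ a₂, a₁ ≠ a₂ → mutexCond (P.acts a₁) (P.acts a₂) → u a₁ = 0 ∨ u a₂ = 0) ∧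
  -- amo^R(A)
  (∀ a, ¬ (P.acts a).eligible → u a ≤ 1)

/-- The symbolic transition relation `T^S` of the standard encoding: `T^R` plus
`a = 0 ∨ a = 1` for every action. -/
def TS {VB VN A : Type} [Fintype VN] (P : Problem VB VN A)
    (β : VB → Bool) (ν : VN → ℚ) (u : A → ℕ) (β' : VB → Bool) (ν' : VN → ℚ) : Prop :=
  TR P β ν u β' ν' ∧ ∀ a, u a ≤ 1

/-- A (candidate) model of `Π^R_n` / `Π^S_n` : values for the `n+1` copies of the state
variables and the `n` copies of the ℕ-valued action variables. -/
structure RModel (VB VN A : Type) (n : ℕ) where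
  β : Fin (n + 1) → VB → Bool
  ν : Fin (n + 1) → VN → ℚ
  u : Fin n → A → ℕ

def RModel.validWith {VB VN A : Type} {n : ℕ} [Fintype VN] (m : RModel VB VN A n)
    (P : Problem VB VN A)
    (T : (VB → Bool) → (VN → ℚ) → (A → ℕ) → (VB → Bool) → (VN → ℚ) → Prop) : Prop :=
  m.β 0 = P.init.boolVal ∧ m.ν 0 = P.init.numVal ∧
  (∀ i : Fin n, T (m.β i.castSucc) (m.ν i.castSucc) (m.u i) (m.β i.succ) (m.ν i.succ)) ∧
  P.goalSat (m.β (Fin.last n)) (m.ν (Fin.last n))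

/-- `m` is a model of `Π^R_n`. -/
def RModel.validR {VB VN A : Type} {n : ℕ} [Fintype VN] (m : RModel VB VN A n)
    (P : Problem VB VN A) : Prop :=
  m.validWith P (TR P)

/-- `m` is a model of `Π^S_n`. -/
def RModel.validS {VB VN A : Type} {n : ℕ} [Fintype VN] (m : RModel VB VN A n)
    (P : Problem VB VN A) : Prop :=
  m.validWith P (TS P)

/-- The decoding of the rolled-up/standard encoding: the sequences in which each
action `a` occurs `u a` times consecutively. -/
def decodesRolled {A : Type} (u : A → ℕ) (α : List A) : Prop :=
  ∃ l : List A, l.Nodup ∧ (∀ a, a ∈ l) ∧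
    α = l.flatMap (fun a => List.replicate (u a) a)

/-- The sequences of actions associated to the model `m` of `Π^R_n`/`Π^S_n`
(the set `(Π^R_n)⁻¹` is the union of `m.plans` over the models `m`). -/
def RModel.plans {VB VN A : Type} {n : ℕ} (m : RModel VB VN A n) (α : List A) : Prop :=
  ∃ αs : Fin n → List A, (∀ i, decodesRolled (m.u i) (αs i)) ∧ α = (List.ofFn αs).flatten

/-- `Π^R_n` is satisfiable. -/
def satR {VB VN A : Type} [Fintype VN] (P : Problem VB VN A) (n : ℕ) : Prop :=
  ∃ m : RModel VB VN A n, m.validR P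

/-- `Π^S_n` is satisfiable. -/
def satS {VB VN A : Type} [Fintype VN] (P : Problem VB VN A) (n : ℕ) : Prop :=
  ∃ m : RModel VB VN A n, m.validS P

/-! ## The R²∃ <-encoding Π^< -/

/-- Value of `v^{≪,·}` after chaining through the actions of `l`:
the last auxiliary variable of an action of `l` assigning `v`, else the initial value. -/
noncomputable def chainB {VB VN A : Type} (acts : A → Act VB VN) (l : List A)
    (β : VB → Bool) (aux : A → VB → Bool) (v : VB) : Bool :=
  l.foldl (fun val b => if ((acts b).effB v).isSome then aux b v else val) (β v)

noncomputable def chainN {VB VN A : Type} (acts : A → Act VB VN) (l : List A)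
    (ν : VN → ℚ) (aux : A → VN → ℚ) (x : VN) : ℚ :=
  l.foldl (fun val b => if ((acts b).effN x).isSome then aux b x else val) (ν x)

/-- The actions strictly preceding `a` in the total order `ord`. -/
noncomputable def before {A : Type} (ord : List A) (a : A) : List A :=
  ord.takeWhile (fun b => decide (b ≠ a))

/-- The symbolic transition relation `T^<(X,A,X')` of the R²∃ `<`-encoding.
`actb` gives the values of the Boolean action variables, `auxB`/`auxN` the values of the
fresh state variables `v^a`. -/
def Tlt {VB VN A : Type} [Fintype VN] (P : Problem VB VN A) (ord : List A)
    (β : VB → Bool) (ν : VN → ℚ) (actb : A → Bool)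
    (auxB : A → VB → Bool) (auxN : A → VN → ℚ)
    (β' : VB → Bool) (ν' : VN → ℚ) : Prop :=
  -- pre^<(A)
  (∀ a, actb a = true →
    (∀ v, PropCond.isFalse v ∈ (P.acts a).preB →
      chainB P.acts (before ord a) β auxB v = false) ∧
    (∀ v, PropCond.isTrue v ∈ (P.acts a).preB →
      chainB P.acts (before ord a) β auxB v = true) ∧
    (∀ c ∈ (P.acts a).preN,
      c.op.holds (c.expr.eval (chainN P.acts (before ord a) ν auxN)))) ∧
  -- eff^<(A)
  (∀ a v b, (P.acts a).effB v = some b →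
    (actb a = true → auxB a v = b) ∧
    (actb a = false → auxB a v = chainB P.acts (before ord a) β auxB v)) ∧
  (∀ a x e, (P.acts a).effN x = some e →
    (actb a = true → auxN a x = e.eval (chainN P.acts (before ord a) ν auxN)) ∧
    (actb a = false → auxN a x = chainN P.acts (before ord a) ν auxN x)) ∧
  -- frame^<(V_B ∪ V_N)
  (∀ v, β' v = chainB P.acts ord β auxB v) ∧
  (∀ x, ν' x = chainN P.acts ord ν auxN x)

/-- A (candidate) model of `Π^<_n`. -/
structure LtModel (VB VN A : Type) (n : ℕ) where
  β : Fin (n + 1) → VB → Bool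
  ν : Fin (n + 1) → VN → ℚ
  actb : Fin n → A → Bool
  auxB : Fin n → A → VB → Bool
  auxN : Fin n → A → VN → ℚ

def LtModel.valid {VB VN A : Type} {n : ℕ} [Fintype VN] (m : LtModel VB VN A n)
    (P : Problem VB VN A) (ord : List A) : Prop :=
  m.β 0 = P.init.boolVal ∧ m.ν 0 = P.init.numVal ∧
  (∀ i : Fin n, Tlt P ord (m.β i.castSucc) (m.ν i.castSucc) (m.actb i)
      (m.auxB i) (m.auxN i) (m.β i.succ) (m.ν i.succ)) ∧
  P.goalSat (m.β (Fin.last n)) (m.ν (Fin.last n))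

/-- The plan decoded from a model of `Π^<_n`: at each step, the actions of `ord`
whose Boolean action variable is true, in the order of `ord`. -/
def LtModel.plan {VB VN A : Type} {n : ℕ} (m : LtModel VB VN A n) (ord : List A) : List A :=
  (List.ofFn fun i : Fin n => ord.filter (m.actb i)).flatten

/-- `Π^<_n` is satisfiable. -/
def satLt {VB VN A : Type} [Fintype VN] (P : Problem VB VN A) (ord : List A) (n : ℕ) : Prop :=
  ∃ m : LtModel VB VN A n, m.valid P ord

/-! ## The pattern ≺-encoding Π^≺ -/

/-- `σ^{≺₁}(v)` for Boolean `v`, where `≺₁` is the prefix of `pat` of length `j`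
(`act j` is the value of the action variable of the `j`-th occurrence in the pattern). -/
noncomputable def sigB {VB VN A : Type} (acts : A → Act VB VN) (pat : List A)
    (act : ℕ → ℕ) (β : VB → Bool) : ℕ → VB → Bool
  | 0 => β
  | j + 1 => fun v =>
      match pat[j]? with
      | none => sigB acts pat act β j v
      | some a =>
          match (acts a).effB v with
          | some true => sigB acts pat act β j v || decide (0 < act j)
          | some false => sigB acts pat act β j v && decide (act j = 0)
          | none => sigB acts pat act β j v

/-- `σ^{≺₁}(x)` for numeric `x` (`aux j` gives the values of the fresh variables
`x^{≺₁;a}` introduced for the general assignments of the `j`-th occurrence). -/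
noncomputable def sigN {VB VN A : Type} [Fintype VN] (acts : A → Act VB VN) (pat : List A)
    (act : ℕ → ℕ) (aux : ℕ → VN → ℚ) (ν : VN → ℚ) : ℕ → VN → ℚ
  | 0 => ν
  | j + 1 => fun x =>
      match pat[j]? with
      | none => sigN acts pat act aux ν j x
      | some a =>
          match (acts a).effN x with
          | none => sigN acts pat act aux ν j x
          | some e =>
              if (acts a).isIncr x e then
                sigN acts pat act aux ν j x +
                  (act j : ℚ) * (incrPart e x).eval (sigN acts pat act aux ν j)
              else aux j x

/-- The symbolic transition relation `T^≺(X,A,X')` of the pattern `≺`-encoding. -/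
def Tpat {VB VN A : Type} [Fintype VN] (P : Problem VB VN A) (pat : List A)
    (β : VB → Bool) (ν : VN → ℚ) (act : ℕ → ℕ) (aux : ℕ → VN → ℚ)
    (β' : VB → Bool) (ν' : VN → ℚ) : Prop :=
  (∀ (j : ℕ) (hj : j < pat.length),
    -- pre^≺(A)
    (∀ v, PropCond.isFalse v ∈ (P.acts (pat.get ⟨j, hj⟩)).preB → 0 < act j →
      sigB P.acts pat act β j v = false) ∧
    (∀ v, PropCond.isTrue v ∈ (P.acts (pat.get ⟨j, hj⟩)).preB → 0 < act j →
      sigB P.acts pat act β j v = true) ∧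
    (∀ c ∈ (P.acts (pat.get ⟨j, hj⟩)).preN,
      (0 < act j → c.op.holds (c.expr.eval (sigN P.acts pat act aux ν j))) ∧
      (1 < act j → c.op.holds
        (rolledEval (P.acts (pat.get ⟨j, hj⟩)) (act j) c.expr (sigN P.acts pat act aux ν j)))) ∧
    -- eff^≺(A) (for the general assignments)
    (∀ x e, (P.acts (pat.get ⟨j, hj⟩)).effN x = some e →
      ¬ (P.acts (pat.get ⟨j, hj⟩)).isIncr x e →
      (act j = 0 → aux j x = sigN P.acts pat act aux ν j x) ∧
      (0 < act j → aux j x = e.eval (sigN P.acts pat act aux ν j))) ∧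
    -- amo^≺(A)
    (¬ (P.acts (pat.get ⟨j, hj⟩)).eligible → act j ≤ 1)) ∧
  -- frame^≺(V_B ∪ V_N)
  (∀ v, β' v = sigB P.acts pat act β pat.length v) ∧
  (∀ x, ν' x = sigN P.acts pat act aux ν pat.length x)

/-- The sequence decoded from the values `act` of the action variables of the pattern:
the `j`-th occurrence repeated `act j` times, in the order of the pattern. -/
def decodePat {A : Type} (pat : List A) (act : ℕ → ℕ) : List A :=
  (List.ofFn fun j : Fin pat.length => List.replicate (act j.val) (pat.get j)).flatten

/-- A (candidate) model of `Π^≺_n`. -/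
structure PatModel (VB VN A : Type) (n : ℕ) where
  β : Fin (n + 1) → VB → Bool
  ν : Fin (n + 1) → VN → ℚ
  act : Fin n → ℕ → ℕ
  aux : Fin n → ℕ → VN → ℚ

def PatModel.valid {VB VN A : Type} {n : ℕ} [Fintype VN] (m : PatModel VB VN A n)
    (P : Problem VB VN A) (pat : List A) : Prop :=
  m.β 0 = P.init.boolVal ∧ m.ν 0 = P.init.numVal ∧
  (∀ i : Fin n, Tpat P pat (m.β i.castSucc) (m.ν i.castSucc) (m.act i) (m.aux i)
      (m.β i.succ) (m.ν i.succ)) ∧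
  P.goalSat (m.β (Fin.last n)) (m.ν (Fin.last n))

/-- The plan decoded from a model of `Π^≺_n`. -/
def PatModel.plan {VB VN A : Type} {n : ℕ} (m : PatModel VB VN A n) (pat : List A) : List A :=
  (List.ofFn fun i : Fin n => decodePat pat (m.act i)).flatten

/-- `Π^≺_n` is satisfiable. -/
def satPat {VB VN A : Type} [Fintype VN] (P : Problem VB VN A) (pat : List A) (n : ℕ) : Prop :=
  ∃ m : PatModel VB VN A n, m.valid P pat

/-! ## Abstract encodings -/

/-- An abstract encoding `Π^E = ⟨X, A, I(X), T(X,A,X'), G(X)⟩` of a problem: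
`XAsgn` is the type of assignments to the state variables `X ⊇ V_B ∪ V_N`
(with projections giving the values of the variables of `V_B ∪ V_N`), `AAsgn` the type
of assignments to the action variables, `T` the symbolic transition relation and
`decode` its decoding function, associating at least one action sequence to each model. -/
structure Encoding (VB VN A : Type) where
  XAsgn : Type
  AAsgn : Type
  projB : XAsgn → VB → Bool
  projN : XAsgn → VN → ℚ
  T : XAsgn → AAsgn → XAsgn → Prop
  decode : XAsgn → AAsgn → XAsgn → List A → Prop
  decode_exists : ∀ x u x', T x u x' → ∃ α, decode x u x' α

def Encoding.stateOf {VB VN A : Type} (E : Encoding VB VN A) (x : E.XAsgn) : PState VB VN :=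
  ⟨E.projB x, E.projN x⟩

/-- The symbolic transition relation of `E` is correct: every action sequence
corresponding to a model of `T` is executable in the state given by the model and
leads to the state given by the primed variables. -/
def Encoding.correctT {VB VN A : Type} [Fintype VN] (E : Encoding VB VN A)
    (P : Problem VB VN A) : Prop :=
  ∀ x u x', E.T x u x' → ∀ α, E.decode x u x' α →
    execSeq P.acts α (E.stateOf x) = some (E.stateOf x')

/-- A (candidate) model of `Π^E_n`. -/
structure EncModel {VB VN A : Type} (E : Encoding VB VN A) (n : ℕ) where
  xs : Fin (n + 1) → E.XAsgn
  us : Fin n → E.AAsgn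

def EncModel.valid {VB VN A : Type} [Fintype VN] {E : Encoding VB VN A} {n : ℕ}
    (m : EncModel E n) (P : Problem VB VN A) : Prop :=
  E.projB (m.xs 0) = P.init.boolVal ∧ E.projN (m.xs 0) = P.init.numVal ∧
  (∀ i : Fin n, E.T (m.xs i.castSucc) (m.us i) (m.xs i.succ)) ∧
  P.goalSat (E.projB (m.xs (Fin.last n))) (E.projN (m.xs (Fin.last n)))

/-- The action sequences associated to a model of `Π^E_n`
(`(Π^E_n)⁻¹` is the union of `m.plans` over the models `m` of `Π^E_n`). -/
def EncModel.plans {VB VN A : Type} {E : Encoding VB VN A} {n : ℕ}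
    (m : EncModel E n) (α : List A) : Prop :=
  ∃ αs : Fin n → List A,
    (∀ i, E.decode (m.xs i.castSucc) (m.us i) (m.xs i.succ) (αs i)) ∧
    α = (List.ofFn αs).flatten

/-- The quantity `Δ` for an action `a` and an expression `ψ`: the sum, over the linear
increments `x += ψ₁` of `a` with `x` occurring in `ψ`, of `ψ₁` weighted by the coefficient
of `x` in `ψ`. -/
noncomputable def deltaVal {VB VN : Type} [Fintype VN] (a : Act VB VN)
    (ψ : LinExpr VN) (ν : VN → ℚ) : ℚ :=
  ∑ x, ψ.coeff x *
    (match a.effN x with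
     | some e => if a.isIncr x e then (incrPart e x).eval ν else 0
     | none => 0)


/-! ## Auxiliary development for the dominance proof -/

section DominanceProof

variable {VB VN A : Type} [Fintype VN]

lemma eval_congr (e : LinExpr VN) {ν₁ ν₂ : VN → ℚ}
    (h : ∀ y, e.coeff y ≠ 0 → ν₁ y = ν₂ y) : e.eval ν₁ = e.eval ν₂ := by
  unfold LinExpr.eval
  congr 1
  refine Finset.sum_congr rfl fun y _ => ?_
  by_cases hy : e.coeff y = 0
  · simp [hy]
  · rw [h y hy]

/-- The value of the action variable of the `j`-th occurrence of the pattern: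
`u a` at the first occurrence of `a`, `0` elsewhere. -/
noncomputable def actOf (pat : List A) (u : A → ℕ) (j : ℕ) : ℕ :=
  match pat[j]? with
  | some a => if (∀ k < j, pat[k]? ≠ some a) then u a else 0
  | none => 0

lemma actOf_pos {pat : List A} {u : A → ℕ} {j : ℕ} (h : 0 < actOf pat u j) :
    ∃ a, pat[j]? = some a ∧ actOf pat u j = u a ∧ 0 < u a ∧ ∀ k < j, pat[k]? ≠ some a := by
  unfold actOf at h ⊢
  rcases hj : pat[j]? with _ | a
  · rw [hj] at h; simp at h
  · rw [hj] at h
    have h' : (0:ℕ) < if (∀ k < j, pat[k]? ≠ some a) then u a else 0 := h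
    by_cases hf : ∀ k < j, pat[k]? ≠ some a
    · rw [if_pos hf] at h'
      exact ⟨a, rfl, if_pos hf, h', hf⟩
    · rw [if_neg hf] at h'
      omega

lemma actOf_first {pat : List A} {u : A → ℕ} {k : ℕ} {b : A} (hk : pat[k]? = some b)
    (hfirst : ∀ i < k, pat[i]? ≠ some b) : actOf pat u k = u b := by
  unfold actOf
  rw [hk]
  exact if_pos hfirst

lemma actOf_le_one {pat : List A} {u : A → ℕ} (hu : ∀ a, u a ≤ 1) (j : ℕ) :
    actOf pat u j ≤ 1 := by
  rcases Nat.eq_zero_or_pos (actOf pat u j) with h | h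
  · omega
  · obtain ⟨a, -, heq, -, -⟩ := actOf_pos h
    rw [heq]; exact hu a

lemma exists_first {p : ℕ → Prop} (h : ∃ k, p k) : ∃ k, p k ∧ ∀ i < k, ¬ p i :=
  ⟨Nat.find h, Nat.find_spec h, fun i hi => Nat.find_min h hi⟩

lemma actOf_ne {pat : List A} {u : A → ℕ} {j k : ℕ} {a b : A}
    (hj : pat[j]? = some a) (hk : pat[k]? = some b)
    (haj : 0 < actOf pat u j) (hak : 0 < actOf pat u k) (hkj : k < j) : b ≠ a := by
  rintro rfl
  obtain ⟨a', hj', -, -, hfirst⟩ := actOf_pos haj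
  rw [hj] at hj'
  injection hj' with h'
  subst h'
  exact hfirst k hkj hk

/-- The intended values of the numeric variables after the prefix of length `j`. -/
noncomputable def nuS (acts : A → Act VB VN) (pat : List A) (act : ℕ → ℕ)
    (ν : VN → ℚ) : ℕ → VN → ℚ
  | 0 => ν
  | j + 1 => fun x =>
      match pat[j]? with
      | none => nuS acts pat act ν j x
      | some a =>
          match (acts a).effN x with
          | none => nuS acts pat act ν j x
          | some e =>
              if (acts a).isIncr x e then
                nuS acts pat act ν j x +
                  (act j : ℚ) * (incrPart e x).eval (nuS acts pat act ν j)
              else if act j = 0 then nuS acts pat act ν j x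
              else e.eval (nuS acts pat act ν j)

/-- The intended values of the auxiliary variables. -/
noncomputable def auxS (acts : A → Act VB VN) (pat : List A) (act : ℕ → ℕ)
    (ν : VN → ℚ) (j : ℕ) (x : VN) : ℚ :=
  match pat[j]? with
  | none => nuS acts pat act ν j x
  | some a =>
      match (acts a).effN x with
      | none => nuS acts pat act ν j x
      | some e => if act j = 0 then nuS acts pat act ν j x
                  else e.eval (nuS acts pat act ν j)

lemma sig_eq (acts : A → Act VB VN) (pat : List A) (act : ℕ → ℕ) (ν : VN → ℚ) :
    ∀ j, sigN acts pat act (auxS acts pat act ν) ν j = nuS acts pat act ν j := by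
  intro j
  induction j with
  | zero => rfl
  | succ j ih =>
    funext x
    rcases hj : pat[j]? with _ | a
    · simp only [sigN, nuS, hj, ih]
    · rcases he : (acts a).effN x with _ | e
      · simp only [sigN, nuS, hj, he, ih]
      · by_cases hin : (acts a).isIncr x e
        · simp only [sigN, nuS, hj, he, if_pos hin, ih]
        · simp only [sigN, nuS, auxS, hj, he, if_neg hin, ih]

/-- A numeric variable is touched by the first `j` occurrences. -/
def touchN (acts : A → Act VB VN) (pat : List A) (u : A → ℕ) (j : ℕ) (x : VN) : Prop :=
  ∃ k a, k < j ∧ pat[k]? = some a ∧ 0 < actOf pat u k ∧ (acts a).assignsN x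

/-- A Boolean variable is touched by the first `j` occurrences. -/
def touchB (acts : A → Act VB VN) (pat : List A) (u : A → ℕ) (j : ℕ) (v : VB) : Prop :=
  ∃ k a, k < j ∧ pat[k]? = some a ∧ 0 < actOf pat u k ∧ (acts a).assignsB v

lemma no_mutex {P : Problem VB VN A} {β : VB → Bool} {ν : VN → ℚ} {u : A → ℕ}
    {β' : VB → Bool} {ν' : VN → ℚ} (hTR : TR P β ν u β' ν') {a b : A} (hab : a ≠ b)
    (ha : 0 < u a) (hb : 0 < u b) : ¬ mutexCond (P.acts a) (P.acts b) := fun hm => by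
  rcases hTR.2.2.2.2.2.1 a b hab hm with h | h <;> omega

lemma not_touchN_of_occurs {P : Problem VB VN A} {β : VB → Bool} {ν : VN → ℚ} {u : A → ℕ}
    {β' : VB → Bool} {ν' : VN → ℚ} {pat : List A} {j : ℕ} {a : A} {y : VN}
    (hTR : TR P β ν u β' ν') (hj : pat[j]? = some a) (haj : 0 < actOf pat u j)
    (hy : occursInEff (P.acts a) y ∨ occursInPre (P.acts a) y) :
    ¬ touchN P.acts pat u j y := by
  rintro ⟨k, b, hk, hbk, hak, hass⟩
  obtain ⟨b', hk', -, hub, -⟩ := actOf_pos hak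
  rw [hbk] at hk'
  injection hk' with h; subst h
  obtain ⟨a', hj', -, hua, -⟩ := actOf_pos haj
  rw [hj] at hj'
  injection hj' with h; subst h
  have hne : b ≠ a := actOf_ne hj hbk haj hak hk
  exact no_mutex hTR hne hub hua (Or.inr (Or.inr ⟨y, hass, hy⟩))

lemma nuS_spec {P : Problem VB VN A} {β : VB → Bool} {ν : VN → ℚ} {u : A → ℕ}
    {β' : VB → Bool} {ν' : VN → ℚ} {pat : List A}
    (hTR : TR P β ν u β' ν') (j : ℕ) :
    (∀ x, touchN P.acts pat u j x → nuS P.acts pat (actOf pat u) ν j x = ν' x) ∧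
    (∀ x, ¬ touchN P.acts pat u j x → nuS P.acts pat (actOf pat u) ν j x = ν x) := by
  induction j with
  | zero =>
    constructor
    · rintro x ⟨k, a, hk, -⟩; omega
    · intro x _; rfl
  | succ j ih =>
    rcases hj : pat[j]? with _ | a
    · have hnu : ∀ x, nuS P.acts pat (actOf pat u) ν (j+1) x
          = nuS P.acts pat (actOf pat u) ν j x := by
        intro x; simp only [nuS, hj]
      have hiff : ∀ x, touchN P.acts pat u (j+1) x ↔ touchN P.acts pat u j x := by
        intro x
        constructor
        · rintro ⟨k, b, hk, hbk, hak, hass⟩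
          rcases Nat.lt_succ_iff_lt_or_eq.mp hk with h | rfl
          · exact ⟨k, b, h, hbk, hak, hass⟩
          · rw [hj] at hbk; cases hbk
        · rintro ⟨k, b, hk, hbk, hak, hass⟩
          exact ⟨k, b, Nat.lt_succ_of_lt hk, hbk, hak, hass⟩
      exact ⟨fun x hx => (hnu x).trans (ih.1 x ((hiff x).mp hx)),
             fun x hx => (hnu x).trans (ih.2 x (fun h => hx ((hiff x).mpr h)))⟩
    · by_cases h0 : actOf pat u j = 0
      · have hnu : ∀ x, nuS P.acts pat (actOf pat u) ν (j+1) x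
            = nuS P.acts pat (actOf pat u) ν j x := by
          intro x
          rcases he : (P.acts a).effN x with _ | e
          · simp only [nuS, hj, he]
          · by_cases hin : (P.acts a).isIncr x e
            · simp only [nuS, hj, he, if_pos hin, h0]; ring
            · simp only [nuS, hj, he, if_neg hin, if_pos h0]
        have hiff : ∀ x, touchN P.acts pat u (j+1) x ↔ touchN P.acts pat u j x := by
          intro x
          constructor
          · rintro ⟨k, b, hk, hbk, hak, hass⟩
            rcases Nat.lt_succ_iff_lt_or_eq.mp hk with h | rfl
            · exact ⟨k, b, h, hbk, hak, hass⟩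
            · omega
          · rintro ⟨k, b, hk, hbk, hak, hass⟩
            exact ⟨k, b, Nat.lt_succ_of_lt hk, hbk, hak, hass⟩
        exact ⟨fun x hx => (hnu x).trans (ih.1 x ((hiff x).mp hx)),
               fun x hx => (hnu x).trans (ih.2 x (fun h => hx ((hiff x).mpr h)))⟩
      · have haj : 0 < actOf pat u j := Nat.pos_of_ne_zero h0
        obtain ⟨a', hj', haeq, hua, -⟩ := actOf_pos haj
        rw [hj] at hj'
        injection hj' with h'; subst h'
        constructor
        · rintro x ⟨k, b, hk, hbk, hak, hass⟩
          rcases hx : (P.acts a).effN x with _ | e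
          · have hkj : k < j := by
              rcases Nat.lt_succ_iff_lt_or_eq.mp hk with h | rfl
              · exact h
              · rw [hj] at hbk
                injection hbk with h''; subst h''
                exact absurd hx hass
            have ht : touchN P.acts pat u j x := ⟨k, b, hkj, hbk, hak, hass⟩
            have : nuS P.acts pat (actOf pat u) ν (j+1) x
                = nuS P.acts pat (actOf pat u) ν j x := by
              simp only [nuS, hj, hx]
            rw [this]
            exact ih.1 x ht
          · have hnt : ¬ touchN P.acts pat u j x :=
              not_touchN_of_occurs hTR hj haj (Or.inl (Or.inl (by simp [Act.assignsN, hx])))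
            have hx0 : nuS P.acts pat (actOf pat u) ν j x = ν x := ih.2 x hnt
            have heffs := ((hTR.2.2.1 a hua).2 x e hx)
            by_cases hin : (P.acts a).isIncr x e
            · have h1 : (incrPart e x).eval (nuS P.acts pat (actOf pat u) ν j)
                  = (incrPart e x).eval ν := by
                refine eval_congr _ fun y hy => ih.2 y ?_
                have hey : e.coeff y ≠ 0 ∧ y ≠ x := by
                  by_cases hyx : y = x
                  · subst hyx
                    simp [incrPart] at hy
                  · exact ⟨by simpa [incrPart, Function.update_of_ne hyx] using hy, hyx⟩
                exact not_touchN_of_occurs hTR hj haj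
                  (Or.inl (Or.inr ⟨x, e, hx, hey.1⟩))
              have : nuS P.acts pat (actOf pat u) ν (j+1) x
                  = nuS P.acts pat (actOf pat u) ν j x
                    + (actOf pat u j : ℚ)
                      * (incrPart e x).eval (nuS P.acts pat (actOf pat u) ν j) := by
                simp only [nuS, hj, hx, if_pos hin]
              rw [this, h1, hx0, haeq, heffs.1 hin]
            · have h1 : e.eval (nuS P.acts pat (actOf pat u) ν j) = e.eval ν := by
                refine eval_congr _ fun y hy => ih.2 y ?_
                exact not_touchN_of_occurs hTR hj haj (Or.inl (Or.inr ⟨x, e, hx, hy⟩))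
              have : nuS P.acts pat (actOf pat u) ν (j+1) x
                  = e.eval (nuS P.acts pat (actOf pat u) ν j) := by
                simp only [nuS, hj, hx, if_neg hin, if_neg h0]
              rw [this, h1, heffs.2 hin]
        · intro x hx
          have hnone : (P.acts a).effN x = none := by
            rcases he : (P.acts a).effN x with _ | e
            · rfl
            · exact absurd ⟨j, a, Nat.lt_succ_self j, hj, haj, by simp [Act.assignsN, he]⟩ hx
          have hnt : ¬ touchN P.acts pat u j x := fun ⟨k, b, hk, hbk, hak, hass⟩ =>
            hx ⟨k, b, Nat.lt_succ_of_lt hk, hbk, hak, hass⟩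
          have : nuS P.acts pat (actOf pat u) ν (j+1) x
              = nuS P.acts pat (actOf pat u) ν j x := by
            simp only [nuS, hj, hnone]
          rw [this]
          exact ih.2 x hnt

lemma sigB_spec {P : Problem VB VN A} {β : VB → Bool} {ν : VN → ℚ} {u : A → ℕ}
    {β' : VB → Bool} {ν' : VN → ℚ} {pat : List A}
    (hTR : TR P β ν u β' ν') (j : ℕ) :
    (∀ v, touchB P.acts pat u j v → sigB P.acts pat (actOf pat u) β j v = β' v) ∧
    (∀ v, ¬ touchB P.acts pat u j v → sigB P.acts pat (actOf pat u) β j v = β v) := by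
  induction j with
  | zero =>
    constructor
    · rintro v ⟨k, a, hk, -⟩; omega
    · intro v _; rfl
  | succ j ih =>
    rcases hj : pat[j]? with _ | a
    · have hnu : ∀ v, sigB P.acts pat (actOf pat u) β (j+1) v
          = sigB P.acts pat (actOf pat u) β j v := by
        intro v; simp only [sigB, hj]
      have hiff : ∀ v, touchB P.acts pat u (j+1) v ↔ touchB P.acts pat u j v := by
        intro v
        constructor
        · rintro ⟨k, b, hk, hbk, hak, hass⟩
          rcases Nat.lt_succ_iff_lt_or_eq.mp hk with h | rfl
          · exact ⟨k, b, h, hbk, hak, hass⟩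
          · rw [hj] at hbk; cases hbk
        · rintro ⟨k, b, hk, hbk, hak, hass⟩
          exact ⟨k, b, Nat.lt_succ_of_lt hk, hbk, hak, hass⟩
      exact ⟨fun v hv => (hnu v).trans (ih.1 v ((hiff v).mp hv)),
             fun v hv => (hnu v).trans (ih.2 v (fun h => hv ((hiff v).mpr h)))⟩
    · by_cases h0 : actOf pat u j = 0
      · have hnu : ∀ v, sigB P.acts pat (actOf pat u) β (j+1) v
            = sigB P.acts pat (actOf pat u) β j v := by
          intro v
          rcases he : (P.acts a).effB v with _ | b
          · simp only [sigB, hj, he]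
          · cases b
            · simp only [sigB, hj, he, h0]
              simp
            · simp only [sigB, hj, he, h0]
              simp
        have hiff : ∀ v, touchB P.acts pat u (j+1) v ↔ touchB P.acts pat u j v := by
          intro v
          constructor
          · rintro ⟨k, b, hk, hbk, hak, hass⟩
            rcases Nat.lt_succ_iff_lt_or_eq.mp hk with h | rfl
            · exact ⟨k, b, h, hbk, hak, hass⟩
            · omega
          · rintro ⟨k, b, hk, hbk, hak, hass⟩
            exact ⟨k, b, Nat.lt_succ_of_lt hk, hbk, hak, hass⟩
        exact ⟨fun v hv => (hnu v).trans (ih.1 v ((hiff v).mp hv)),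
               fun v hv => (hnu v).trans (ih.2 v (fun h => hv ((hiff v).mpr h)))⟩
      · have haj : 0 < actOf pat u j := Nat.pos_of_ne_zero h0
        obtain ⟨a', hj', haeq, hua, -⟩ := actOf_pos haj
        rw [hj] at hj'
        injection hj' with h'; subst h'
        have heffB := (hTR.2.2.1 a hua).1
        constructor
        · rintro v ⟨k, b, hk, hbk, hak, hass⟩
          rcases hv : (P.acts a).effB v with _ | bv
          · have hkj : k < j := by
              rcases Nat.lt_succ_iff_lt_or_eq.mp hk with h | rfl
              · exact h
              · rw [hj] at hbk
                injection hbk with h''; subst h''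
                exact absurd hv hass
            have ht : touchB P.acts pat u j v := ⟨k, b, hkj, hbk, hak, hass⟩
            have : sigB P.acts pat (actOf pat u) β (j+1) v
                = sigB P.acts pat (actOf pat u) β j v := by
              simp only [sigB, hj, hv]
            rw [this]
            exact ih.1 v ht
          · have hβ' : β' v = bv := heffB v bv hv
            cases bv
            · have : sigB P.acts pat (actOf pat u) β (j+1) v = false := by
                simp only [sigB, hj, hv]
                simp [h0]
              rw [this, hβ']
            · have : sigB P.acts pat (actOf pat u) β (j+1) v = true := by
                simp only [sigB, hj, hv]
                simp [haj]
              rw [this, hβ']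
        · intro v hv
          have hnone : (P.acts a).effB v = none := by
            rcases he : (P.acts a).effB v with _ | b
            · rfl
            · exact absurd ⟨j, a, Nat.lt_succ_self j, hj, haj, by simp [Act.assignsB, he]⟩ hv
          have hnt : ¬ touchB P.acts pat u j v := fun ⟨k, b, hk, hbk, hak, hass⟩ =>
            hv ⟨k, b, Nat.lt_succ_of_lt hk, hbk, hak, hass⟩
          have : sigB P.acts pat (actOf pat u) β (j+1) v
              = sigB P.acts pat (actOf pat u) β j v := by
            simp only [sigB, hj, hnone]
          rw [this]
          exact ih.2 v hnt

lemma step_Tpat {P : Problem VB VN A} {β : VB → Bool} {ν : VN → ℚ} {u : A → ℕ}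
    {β' : VB → Bool} {ν' : VN → ℚ} {pat : List A}
    (hcomplete : ∀ a : A, a ∈ pat)
    (hTR : TR P β ν u β' ν') (hu : ∀ a, u a ≤ 1) :
    Tpat P pat β ν (actOf pat u) (auxS P.acts pat (actOf pat u) ν) β' ν' := by
  have hsig := sig_eq P.acts pat (actOf pat u) ν
  refine ⟨fun j hj => ?_, fun v => ?_, fun x => ?_⟩
  · have hja : pat[j]? = some (pat.get ⟨j, hj⟩) := List.getElem?_eq_getElem hj
    set a := pat.get ⟨j, hj⟩ with ha
    refine ⟨?_, ?_, ?_, ?_, ?_⟩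
    · -- preB false
      intro v hv hpos
      obtain ⟨a', hj', haeq, hua, -⟩ := actOf_pos hpos
      rw [hja] at hj'
      injection hj' with h'; subst h'
      by_cases ht : touchB P.acts pat u j v
      · obtain ⟨k, b, hk, hbk, hak, hass⟩ := ht
        obtain ⟨b', hk', -, hub, -⟩ := actOf_pos hak
        rw [hbk] at hk'
        injection hk' with h''; subst h''
        have hne : b ≠ a := actOf_ne hja hbk hpos hak hk
        rcases he : (P.acts b).effB v with _ | bv
        · exact absurd he hass
        · cases bv
          · have hβ' : β' v = false := ((hTR.2.2.1 b hub).1) v false he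
            rw [(sigB_spec hTR j).1 v ⟨k, b, hk, hbk, hak, hass⟩, hβ']
          · exact absurd (Or.inl ⟨v, hv, he⟩)
              (no_mutex hTR (Ne.symm hne) hua hub)
      · rw [(sigB_spec hTR j).2 v ht]
        exact ((hTR.1 a hua).1) v hv
    · -- preB true
      intro v hv hpos
      obtain ⟨a', hj', haeq, hua, -⟩ := actOf_pos hpos
      rw [hja] at hj'
      injection hj' with h'; subst h'
      by_cases ht : touchB P.acts pat u j v
      · obtain ⟨k, b, hk, hbk, hak, hass⟩ := ht
        obtain ⟨b', hk', -, hub, -⟩ := actOf_pos hak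
        rw [hbk] at hk'
        injection hk' with h''; subst h''
        have hne : b ≠ a := actOf_ne hja hbk hpos hak hk
        rcases he : (P.acts b).effB v with _ | bv
        · exact absurd he hass
        · cases bv
          · exact absurd (Or.inr (Or.inl ⟨v, hv, he⟩))
              (no_mutex hTR (Ne.symm hne) hua hub)
          · have hβ' : β' v = true := ((hTR.2.2.1 b hub).1) v true he
            rw [(sigB_spec hTR j).1 v ⟨k, b, hk, hbk, hak, hass⟩, hβ']
      · rw [(sigB_spec hTR j).2 v ht]
        exact ((hTR.1 a hua).2.1) v hv
    · -- preN
      intro c hc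
      constructor
      · intro hpos
        obtain ⟨a', hj', haeq, hua, -⟩ := actOf_pos hpos
        rw [hja] at hj'
        injection hj' with h'; subst h'
        rw [hsig j]
        have h1 : c.expr.eval (nuS P.acts pat (actOf pat u) ν j) = c.expr.eval ν := by
          refine eval_congr _ fun y hy => (nuS_spec hTR j).2 y ?_
          exact not_touchN_of_occurs hTR hja hpos (Or.inr ⟨c, hc, hy⟩)
        rw [h1]
        exact ((hTR.1 a hua).2.2) c hc
      · intro h1
        have := actOf_le_one (pat := pat) hu j
        omega
    · -- effN general assignments
      intro x e he hnin
      constructor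
      · intro h0
        rw [hsig j]
        show auxS P.acts pat (actOf pat u) ν j x = _
        simp only [auxS, hja, he]
        exact if_pos h0
      · intro hpos
        rw [hsig j]
        show auxS P.acts pat (actOf pat u) ν j x = _
        simp only [auxS, hja, he]
        exact if_neg (by omega)
    · -- amo
      intro _
      exact actOf_le_one hu j
  · -- frame B
    by_cases ht : touchB P.acts pat u pat.length v
    · exact ((sigB_spec hTR pat.length).1 v ht).symm
    · rw [(sigB_spec hTR pat.length).2 v ht]
      refine hTR.2.2.2.1 v fun b hb => ?_
      by_contra hub
      have hub' : 0 < u b := Nat.pos_of_ne_zero hub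
      obtain ⟨k, hk, hfirst⟩ := exists_first (List.mem_iff_getElem?.mp (hcomplete b))
      have hklen : k < pat.length := (List.getElem?_eq_some_iff.mp hk).1
      have hact : 0 < actOf pat u k := by rw [actOf_first hk hfirst]; exact hub'
      exact ht ⟨k, b, hklen, hk, hact, hb⟩
  · -- frame N
    rw [hsig pat.length]
    by_cases ht : touchN P.acts pat u pat.length x
    · exact ((nuS_spec hTR pat.length).1 x ht).symm
    · rw [(nuS_spec hTR pat.length).2 x ht]
      refine hTR.2.2.2.2.1 x fun b hb => ?_
      by_contra hub
      have hub' : 0 < u b := Nat.pos_of_ne_zero hub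
      obtain ⟨k, hk, hfirst⟩ := exists_first (List.mem_iff_getElem?.mp (hcomplete b))
      have hklen : k < pat.length := (List.getElem?_eq_some_iff.mp hk).1
      have hact : 0 < actOf pat u k := by rw [actOf_first hk hfirst]; exact hub'
      exact ht ⟨k, b, hklen, hk, hact, hb⟩

end DominanceProof

/-- for every complete pattern `≺`, the pattern `≺`-encoding `Π^≺`
dominates the standard encoding `Π^S`: for every bound `n`, if `Π^S_n` is satisfiable
then `Π^≺_n` is satisfiable. -/
theorem pattern_dominates_standard
    {VB VN A : Type} [Fintype VB] [Fintype VN] [Fintype A]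
    (P : Problem VB VN A) (pat : List A) (hcomplete : ∀ a : A, a ∈ pat)
    (n : ℕ) (h : satS P n) :
    satPat P pat n := by
  obtain ⟨m, hβ0, hν0, hT, hgoal⟩ := h
  refine ⟨⟨m.β, m.ν, fun i => actOf pat (m.u i),
    fun i => auxS P.acts pat (actOf pat (m.u i)) (m.ν i.castSucc)⟩,
    hβ0, hν0, fun i => ?_, hgoal⟩
  obtain ⟨hTR, hu⟩ := hT i
  exact step_Tpat hcomplete hTR hu
end PatternPlanning
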